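/- Let U ⊆ ℝⁿ be open and connected, and let P_{n,d}(U) be the set of degree-d homogeneous polynomials on ℝⁿ hyperbolic with respect to every e ∈ U. If a sequence (h_k) in P_{n,d}(U) converges pointwise to a polynomial h, then h ∈ P_{n,d}(U) or h ≡ 0. -/

import Mathlib

open MvPolynomial

/-- `h` is hyperbolic with respect to `e`: `h(e) ≠ 0` and `t ↦ h(x + t·e)` has only
real roots for every `x ∈ ℝⁿ`. -/
def Hyperbolic {n : ℕ} (h : MvPolynomial (Fin n) ℝ) (e : Fin n → ℝ) : Prop :=
  eval e h ≠ 0 ∧ ∀ (x : Fin n → ℝ) (t : ℂ),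
    aeval (fun i => (x i : ℂ) + t * (e i : ℂ)) h = 0 → t.im = 0

/-!
If `p` is homogeneous of degree `d`, then `t ↦ p(x + t e)` has degree at most `d` and
`t^d`-coefficient `p(e)`; factoring it over `ℂ` gives `|p(e)| c^d ≤ |p(x + z e)|` as soon as
every root lies at distance at least `c` from `z`. Hyperbolicity in direction `e` makes all roots
real, so `c = |Im z|` works; this inequality survives the limit and forces the roots of the
limit to be real, provided `g(e) ≠ 0`. Non-vanishing of `g` on `U` comes from the same
inequality along `t ↦ h_k(x + t a)` with `a, x ∈ U`: its roots are real and, since `h_k` has no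
zero on `U ⊇ {x + t a : |t| < δ}`, of modulus at least `δ`, so `|h_k(a)| δ^d ≤ |h_k(x)|` in the
limit. Finally `g ≠ 0` and `U` open give some `a ∈ U` with `g(a) ≠ 0`.
-/

open scoped Polynomial
open Filter Topology

namespace Polynomial

theorem norm_coeff_mul_pow_le_norm_eval {K : Type*} [NormedField K] [IsAlgClosed K]
    {P : K[X]} {d : ℕ} (hP : P.natDegree ≤ d) {z : K} {c : ℝ} (hc : 0 ≤ c)
    (hroots : ∀ r, P.IsRoot r → c ≤ ‖z - r‖) :
    ‖P.coeff d‖ * c ^ d ≤ ‖P.eval z‖ := by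
  rcases hP.lt_or_eq with hlt | rfl
  · rw [coeff_eq_zero_of_natDegree_lt hlt, norm_zero, zero_mul]
    exact norm_nonneg _
  have norm_prod (s : Multiset K) : ‖s.prod‖ = (s.map fun a : K => ‖a‖).prod :=
    map_multiset_prod (normHom : K →*₀ ℝ) s
  rw [← leadingCoeff, (IsAlgClosed.splits P).eval_eq_prod_roots, norm_mul, norm_prod,
    Multiset.map_map, ← IsAlgClosed.card_roots_eq_natDegree, ← Multiset.prod_replicate,
    ← Multiset.map_const']
  exact mul_le_mul_of_nonneg_left (Multiset.prod_map_le_prod_map₀ _ _ (fun _ _ => hc)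
    fun r hr => hroots r (isRoot_of_mem_roots hr)) (norm_nonneg _)

theorem tendsto_aeval_of_tendsto_eval {K A ι : Type*} [Field K] [Infinite K]
    [TopologicalSpace K] [CommSemiring A] [Algebra K A] [TopologicalSpace A] [ContinuousAdd A]
    [ContinuousSMul K A] {l : Filter ι} {P : ι → K[X]} {Q : K[X]} {D : ℕ}
    (hP : ∀ i, (P i).natDegree ≤ D) (hQ : Q.natDegree ≤ D)
    (hPQ : ∀ t, Tendsto (fun i => (P i).eval t) l (𝓝 (Q.eval t))) (z : A) :
    Tendsto (fun i => aeval z (P i)) l (𝓝 (aeval z Q)) := by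
  classical
  set v := Infinite.natEmbedding K
  have hinterp : ∀ R : K[X], R.natDegree ≤ D → aeval z R =
      ∑ j ∈ Finset.range (D + 1),
        R.eval (v j) • aeval z (Lagrange.basis (Finset.range (D + 1)) v j) := by
    intro R hR
    have hdeg : R.degree < (Finset.range (D + 1)).card := by
      rw [Finset.card_range]
      exact (degree_le_natDegree.trans_lt (by exact_mod_cast Nat.lt_succ_of_le hR))
    conv_lhs => rw [Lagrange.eq_interpolate (v.injective.injOn) hdeg]
    simp [Lagrange.interpolate_apply, Algebra.smul_def]
  simp only [hinterp _ (hP _), hinterp Q hQ]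
  exact tendsto_finsetSum _ fun j _ => (hPQ (v j)).smul_const _

theorem natDegree_C_add_X_mul_C_le {R : Type*} [Semiring R] (a b : R) :
    (C a + X * C b).natDegree ≤ 1 := by
  compute_degree

end Polynomial

theorem Finsupp.prod_toMultiset_map {α M : Type*} [CommMonoid M] (s : α →₀ ℕ) (f : α → M) :
    (s.toMultiset.map f).prod = s.prod fun i k => f i ^ k := by
  rw [Finsupp.toMultiset_map, Finsupp.prod_toMultiset,
    Finsupp.prod_mapDomain_index (fun _ => pow_zero _) (fun _ _ _ => pow_add _ _ _)]

namespace MvPolynomial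

variable {R σ : Type*} [CommSemiring R]

noncomputable def restrictLine (p : MvPolynomial σ R) (x e : σ → R) : R[X] :=
  aeval (fun i => Polynomial.C (x i) + Polynomial.X * Polynomial.C (e i)) p

theorem aeval_restrictLine {A : Type*} [CommSemiring A] [Algebra R A] (p : MvPolynomial σ R)
    (x e : σ → R) (z : A) :
    Polynomial.aeval z (p.restrictLine x e) =
      aeval (fun i => algebraMap R A (x i) + z * algebraMap R A (e i)) p := by
  rw [restrictLine, ← AlgHom.comp_apply, comp_aeval]
  simp only [map_add, map_mul, Polynomial.aeval_C, Polynomial.aeval_X]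

theorem eval_restrictLine (p : MvPolynomial σ R) (x e : σ → R) (t : R) :
    (p.restrictLine x e).eval t = eval (fun i => x i + t * e i) p := by
  simpa [coe_aeval_eq_eval] using aeval_restrictLine p x e t

theorem restrictLine_monomial (s : σ →₀ ℕ) (r : R) (x e : σ → R) :
    (monomial s r).restrictLine x e = Polynomial.C r *
      (s.toMultiset.map fun i => Polynomial.C (x i) + Polynomial.X * Polynomial.C (e i)).prod := by
  rw [restrictLine, aeval_monomial, Finsupp.prod_toMultiset_map, Polynomial.algebraMap_eq]

theorem natDegree_restrictLine_le (p : MvPolynomial σ R) (x e : σ → R) :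
    (p.restrictLine x e).natDegree ≤ p.totalDegree := by
  conv_lhs => rw [p.as_sum, restrictLine, map_sum]
  refine Polynomial.natDegree_sum_le_of_forall_le _ _ fun s hs => ?_
  rw [← restrictLine, restrictLine_monomial]
  refine (Polynomial.natDegree_C_mul_le _ _).trans <|
    (Polynomial.natDegree_multiset_prod_le _).trans ?_
  rw [Multiset.map_map]
  refine (Multiset.sum_le_card_nsmul _ 1 ?_).trans ?_
  · simp only [Multiset.mem_map, Function.comp_apply, forall_exists_index, and_imp]
    rintro _ i - rfl
    exact Polynomial.natDegree_C_add_X_mul_C_le _ _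
  · rw [Multiset.card_map, Finsupp.card_toMultiset, smul_eq_mul, mul_one]
    exact le_totalDegree hs

theorem IsHomogeneous.coeff_restrictLine {p : MvPolynomial σ R} {d : ℕ} (hp : p.IsHomogeneous d)
    (x e : σ → R) :
    (p.restrictLine x e).coeff d = eval e p := by
  conv_lhs => rw [p.as_sum, restrictLine, map_sum]
  rw [eval_eq, Polynomial.finsetSum_coeff]
  refine Finset.sum_congr rfl fun s hs => ?_
  have hs_card : Multiset.card s.toMultiset * 1 = d := by
    simp only [Finsupp.card_toMultiset, mul_one, ← hp (mem_support_iff.mp hs),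
      Finsupp.weight_apply, Pi.one_apply, smul_eq_mul]
    rfl
  rw [← restrictLine, restrictLine_monomial, Polynomial.coeff_C_mul, ← hs_card,
    ← Multiset.card_map (fun i => Polynomial.C (x i) + Polynomial.X * Polynomial.C (e i)),
    Polynomial.coeff_multiset_prod_of_natDegree_le, Multiset.map_map]
  · show _ = _ * s.prod fun i k => e i ^ k
    rw [← Finsupp.prod_toMultiset_map]
    simp
  · simp only [Multiset.mem_map, forall_exists_index, and_imp]
    rintro _ i - rfl
    exact Polynomial.natDegree_C_add_X_mul_C_le _ _

theorem aeval_ofReal (p : MvPolynomial σ ℝ) (y : σ → ℝ) :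
    aeval (fun i => (y i : ℂ)) p = eval y p := by
  rw [← coe_aeval_eq_eval]
  exact aeval_algebraMap_apply ℂ y p

theorem aeval_ofReal_restrictLine (p : MvPolynomial σ ℝ) (x e : σ → ℝ) (z : ℂ) :
    Polynomial.aeval z (p.restrictLine x e) = aeval (fun i => (x i : ℂ) + z * (e i : ℂ)) p :=
  aeval_restrictLine p x e z

theorem eq_zero_of_eval_eq_zero_on_isOpen {𝕜 : Type*} [RCLike 𝕜] [Fintype σ]
    {p : MvPolynomial σ 𝕜} {U : Set (σ → 𝕜)} (hU : IsOpen U) (hne : U.Nonempty)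
    (h : ∀ x ∈ U, eval x p = 0) : p = 0 := by
  obtain ⟨a, ha⟩ := hne
  have hzero : (fun x => eval x p) =ᶠ[𝓝 a] 0 := Filter.mem_of_superset (hU.mem_nhds ha) h
  refine MvPolynomial.funext fun x => ?_
  rw [map_zero]
  exact (AnalyticOnNhd.eval_mvPolynomial p).eqOn_zero_of_preconnected_of_eventuallyEq_zero
    convex_univ.isPreconnected (Set.mem_univ a) hzero (Set.mem_univ x)

theorem IsHomogeneous.abs_eval_mul_pow_le_norm_aeval {p : MvPolynomial σ ℝ} {d : ℕ}
    (hp : p.IsHomogeneous d) (x e : σ → ℝ) {z : ℂ} {c : ℝ} (hc : 0 ≤ c)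
    (hroots : ∀ r : ℂ,
      MvPolynomial.aeval (fun i => (x i : ℂ) + r * (e i : ℂ)) p = 0 → c ≤ ‖z - r‖) :
    |eval e p| * c ^ d ≤ ‖MvPolynomial.aeval (fun i => (x i : ℂ) + z * (e i : ℂ)) p‖ := by
  set P := (p.restrictLine x e).map (algebraMap ℝ ℂ)
  have hP (w : ℂ) : P.eval w = MvPolynomial.aeval (fun i => (x i : ℂ) + w * (e i : ℂ)) p := by
    rw [Polynomial.eval_map_algebraMap, aeval_ofReal_restrictLine]
  have hdeg : P.natDegree ≤ d :=
    Polynomial.natDegree_map_le.trans ((natDegree_restrictLine_le p x e).trans hp.totalDegree_le)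
  have := Polynomial.norm_coeff_mul_pow_le_norm_eval hdeg hc fun r hr => hroots r (hP r ▸ hr)
  rwa [Polynomial.coeff_map, hp.coeff_restrictLine, hP, Complex.coe_algebraMap,
    Complex.norm_real, Real.norm_eq_abs] at this

theorem tendsto_aeval_line_of_tendsto_eval {ι : Type*} {l : Filter ι}
    {P : ι → MvPolynomial σ ℝ} {Q : MvPolynomial σ ℝ} {D : ℕ} (hP : ∀ i, (P i).totalDegree ≤ D)
    (hQ : Q.totalDegree ≤ D) (hPQ : ∀ y, Tendsto (fun i => eval y (P i)) l (𝓝 (eval y Q)))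
    (x e : σ → ℝ) (z : ℂ) :
    Tendsto (fun i => aeval (fun j => (x j : ℂ) + z * (e j : ℂ)) (P i)) l
      (𝓝 (aeval (fun j => (x j : ℂ) + z * (e j : ℂ)) Q)) := by
  simp only [← aeval_ofReal_restrictLine]
  refine Polynomial.tendsto_aeval_of_tendsto_eval
    (fun i => (natDegree_restrictLine_le _ x e).trans (hP i))
    ((natDegree_restrictLine_le Q x e).trans hQ) (fun t => ?_) z
  simp only [eval_restrictLine]
  exact hPQ _

end MvPolynomial

theorem exists_pos_forall_abs_lt_add_smul_mem {E : Type*} [AddCommGroup E] [Module ℝ E]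
    [TopologicalSpace E] [ContinuousAdd E] [ContinuousSMul ℝ E] {U : Set E} (hU : IsOpen U)
    {x : E} (hx : x ∈ U) (a : E) : ∃ δ > 0, ∀ t : ℝ, |t| < δ → x + t • a ∈ U := by
  have hopen : IsOpen ((fun t : ℝ => x + t • a) ⁻¹' U) := hU.preimage (by fun_prop)
  obtain ⟨δ, hδ, hball⟩ := Metric.isOpen_iff.mp hopen 0 (by simpa using hx)
  exact ⟨δ, hδ, fun t ht => hball (by simpa [Real.dist_eq] using ht)⟩

namespace Hyperbolic

variable {n d : ℕ} {p : MvPolynomial (Fin n) ℝ}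

theorem abs_eval_mul_abs_im_pow_le {e : Fin n → ℝ} (hyp : Hyperbolic p e)
    (hp : p.IsHomogeneous d) (x : Fin n → ℝ) (z : ℂ) :
    |eval e p| * |z.im| ^ d ≤ ‖aeval (fun i => (x i : ℂ) + z * (e i : ℂ)) p‖ :=
  hp.abs_eval_mul_pow_le_norm_aeval x e (abs_nonneg _) fun r hr => by
    have hr_real : r.im = 0 := hyp.2 x r hr
    calc |z.im| = |(z - r).im| := by rw [Complex.sub_im, hr_real, sub_zero]
      _ ≤ ‖z - r‖ := Complex.abs_im_le_norm _

theorem abs_eval_mul_pow_le_abs_eval {a : Fin n → ℝ} (hyp : Hyperbolic p a)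
    (hp : p.IsHomogeneous d) {x : Fin n → ℝ} {δ : ℝ} (hδ : 0 ≤ δ)
    (hne : ∀ t : ℝ, |t| < δ → eval (fun i => x i + t * a i) p ≠ 0) :
    |eval a p| * δ ^ d ≤ |eval x p| := by
  have h := hp.abs_eval_mul_pow_le_norm_aeval x a (z := 0) hδ fun r hr => by
    have hr_real : r.im = 0 := hyp.2 x r hr
    rw [zero_sub, norm_neg, ← Complex.abs_re_eq_norm.mpr hr_real]
    by_contra! hlt
    refine hne r.re hlt ?_
    rw [← Complex.re_add_im r, hr_real] at hr
    simpa [← Complex.ofReal_mul, ← Complex.ofReal_add, aeval_ofReal] using hr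
  simpa [aeval_ofReal] using h

end Hyperbolic

section Limits

variable {n d : ℕ} {ι : Type*} {l : Filter ι} [l.NeBot] {h : ι → MvPolynomial (Fin n) ℝ}
  {g : MvPolynomial (Fin n) ℝ}

theorem eval_ne_zero_of_tendsto_hyperbolic {U : Set (Fin n → ℝ)} (hU : IsOpen U)
    (hdeg : ∀ k, (h k).IsHomogeneous d) {a : Fin n → ℝ} (hhyp : ∀ k, Hyperbolic (h k) a)
    (hne : ∀ k, ∀ x ∈ U, eval x (h k) ≠ 0)
    (hconv : ∀ x, Tendsto (fun k => eval x (h k)) l (𝓝 (eval x g)))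
    (hga : eval a g ≠ 0) {x : Fin n → ℝ} (hx : x ∈ U) : eval x g ≠ 0 := by
  obtain ⟨δ, hδ, hsegment⟩ := exists_pos_forall_abs_lt_add_smul_mem hU hx a
  have hbound : |eval a g| * δ ^ d ≤ |eval x g| :=
    le_of_tendsto_of_tendsto' (((hconv a).abs).mul_const _) (hconv x).abs fun k =>
      (hhyp k).abs_eval_mul_pow_le_abs_eval (hdeg k) hδ.le fun t ht =>
        hne k _ (hsegment t ht)
  have hpos : 0 < |eval a g| * δ ^ d := by positivity
  exact abs_pos.mp (hpos.trans_le hbound)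

theorem Hyperbolic.of_tendsto {e : Fin n → ℝ} (hdeg : ∀ k, (h k).IsHomogeneous d)
    (hhyp : ∀ k, Hyperbolic (h k) e)
    (hconv : ∀ x, Tendsto (fun k => eval x (h k)) l (𝓝 (eval x g)))
    (hge : eval e g ≠ 0) : Hyperbolic g e := by
  refine ⟨hge, fun x z hz => ?_⟩
  have hlim := tendsto_aeval_line_of_tendsto_eval
    (fun k => (hdeg k).totalDegree_le.trans (le_max_left d g.totalDegree))
    (le_max_right d g.totalDegree) hconv x e z
  have hbound : |eval e g| * |z.im| ^ d ≤ 0 := by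
    rw [← norm_zero (E := ℂ), ← hz]
    exact le_of_tendsto_of_tendsto' (((hconv e).abs).mul_const _) hlim.norm fun k =>
      (hhyp k).abs_eval_mul_abs_im_pow_le (hdeg k) x z
  have hpow : |z.im| ^ d = 0 :=
    le_antisymm ((mul_nonpos_iff_pos_imp_nonpos.mp hbound).1 (abs_pos.mpr hge)) (by positivity)
  exact abs_eq_zero.mp (eq_zero_of_pow_eq_zero hpow)

end Limits

theorem hyperbolic_closed_under_limits_general {n d : ℕ} (U : Set (Fin n → ℝ))
    (hUopen : IsOpen U)
    (h : ℕ → MvPolynomial (Fin n) ℝ) (hdeg : ∀ k, (h k).IsHomogeneous d)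
    (hhyp : ∀ k, ∀ e ∈ U, Hyperbolic (h k) e)
    (g : MvPolynomial (Fin n) ℝ)
    (hconv : ∀ x : Fin n → ℝ,
      Filter.Tendsto (fun k => eval x (h k)) Filter.atTop (nhds (eval x g))) :
    (∀ e ∈ U, Hyperbolic g e) ∨ g = 0 := by
  rcases eq_or_ne g 0 with rfl | hg
  · exact Or.inr rfl
  refine Or.inl fun e he => ?_
  obtain ⟨a, haU, hga⟩ : ∃ a ∈ U, eval a g ≠ 0 := by
    by_contra! hzero
    exact hg (eq_zero_of_eval_eq_zero_on_isOpen hUopen ⟨e, he⟩ hzero)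
  have hge : eval e g ≠ 0 :=
    eval_ne_zero_of_tendsto_hyperbolic hUopen hdeg (fun k => hhyp k a haU)
      (fun k x hx => (hhyp k x hx).1) hconv hga he
  exact Hyperbolic.of_tendsto hdeg (fun k => hhyp k e he) hconv hge

/-- If a sequence of degree-`d` homogeneous polynomials, each hyperbolic with respect to
every point of an open connected set `U`, converges pointwise to a polynomial `g`, then
`g` is hyperbolic with respect to every point of `U`, or `g ≡ 0`. -/
theorem hyperbolic_closed_under_limits {n d : ℕ} (U : Set (Fin n → ℝ))
    (hUopen : IsOpen U) (hUconn : IsConnected U)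
    (h : ℕ → MvPolynomial (Fin n) ℝ) (hdeg : ∀ k, (h k).IsHomogeneous d)
    (hhyp : ∀ k, ∀ e ∈ U, Hyperbolic (h k) e)
    (g : MvPolynomial (Fin n) ℝ)
    (hconv : ∀ x : Fin n → ℝ,
      Filter.Tendsto (fun k => eval x (h k)) Filter.atTop (nhds (eval x g))) :
    (∀ e ∈ U, Hyperbolic g e) ∨ g = 0 :=
  hyperbolic_closed_under_limits_general U hUopen h hdeg hhyp g hconv
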